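/- arXiv:1401.0762 — 2 statements merged into one kernel-verified Lean document; each statement's English description precedes it below -/
import Mathlib

section
/- Let Γ ⊂ ℝⁿ be the convex hull of {0} and a polytope contained in ℝⁿ₊, and let γ be a face of Γ with 0 ∈ γ and dual cone σ(γ). Then the relative interior of γ is contained in the interior of ℝⁿ₊ if and only if σ(γ) ∩ ℝⁿ₊ = {0}. -/
open scoped BigOperators

/-- The standard pairing `⟨u,v⟩ = Σᵢ uᵢvᵢ` on `ℝⁿ`. -/
def dotR {n : ℕ} (u v : Fin n → ℝ) : ℝ := ∑ i, u i * v i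

/-- The face of `K` consisting of the minimizers of `⟨u,·⟩` on `K`. -/
def minimizerFace {n : ℕ} (K : Set (Fin n → ℝ)) (u : Fin n → ℝ) : Set (Fin n → ℝ) :=
  {v ∈ K | ∀ w ∈ K, dotR u v ≤ dotR u w}

/-- `γ` is a face of `K`: the set of minimizers of some linear functional on `K`. -/
def IsFaceOf {n : ℕ} (γ K : Set (Fin n → ℝ)) : Prop :=
  ∃ u : Fin n → ℝ, γ = minimizerFace K u

/-- The cone `σ(γ)` dual to a face `γ` of `K`: the closure of the set of linear
functionals `u` whose minimizer face on `K` is exactly `γ`. -/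
def dualFaceCone {n : ℕ} (K γ : Set (Fin n → ℝ)) : Set (Fin n → ℝ) :=
  closure {u | minimizerFace K u = γ}

/-- The nonnegative orthant `ℝⁿ₊`. -/
def orthant (n : ℕ) : Set (Fin n → ℝ) := {x | ∀ i, 0 ≤ x i}

/-- The cone generated by a finite set `G`: nonnegative combinations of elements of `G`. -/
def conicHull {n : ℕ} (G : Finset (Fin n → ℝ)) : Set (Fin n → ℝ) :=
  {x | ∃ c : {g // g ∈ G} → ℝ, (∀ g, 0 ≤ c g) ∧ x = ∑ g, c g • (g : Fin n → ℝ)}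

/-- `F` is a face of the cone `σ`: the intersection of `σ` with the kernel of a linear
functional that is nonnegative on `σ`. -/
def IsFaceOfCone {n : ℕ} (F σ : Set (Fin n → ℝ)) : Prop :=
  ∃ u : Fin n → ℝ, (∀ x ∈ σ, 0 ≤ dotR u x) ∧ F = {x ∈ σ | dotR u x = 0}

/-! Since `0 ∈ γ`, every `u` whose minimizer face is `γ` vanishes on `γ`, and by continuity so does
every `w ∈ σ(γ)`; if `w ≥ 0` and `γ` contains a point with all coordinates positive, this forces
`w = 0`. Conversely, if a relative interior point `p` of `γ` has `pᵢ = 0`, the coordinate `xᵢ`,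
nonnegative on `γ ⊆ ℝⁿ₊`, attains its minimum at a relative interior point and hence vanishes on
all of `γ`. Then for `γ = minimizerFace Γ u` and every `s > 0` the minimizer face of `eᵢ + s • u` is
still `γ`, so letting `s → 0` gives `0 ≠ eᵢ ∈ σ(γ) ∩ ℝⁿ₊`. -/

lemma dotR_eq_dotProduct {n : ℕ} (u v : Fin n → ℝ) : dotR u v = u ⬝ᵥ v := rfl

section MinimizerFace

variable {n : ℕ} {K : Set (Fin n → ℝ)} {u w : Fin n → ℝ}

lemma convex_minimizerFace (hK : Convex ℝ K) (u : Fin n → ℝ) :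
    Convex ℝ (minimizerFace K u) := by
  have hface : minimizerFace K u = K ∩ ⋂ w ∈ K, {v | u ⬝ᵥ v ≤ u ⬝ᵥ w} := by
    ext; simp [minimizerFace, dotR_eq_dotProduct]
  rw [hface]
  exact hK.inter <| convex_iInter₂ fun w _ =>
    convex_halfSpace_le ⟨dotProduct_add u, fun c x => dotProduct_smul c u x⟩ (u ⬝ᵥ w)

lemma dotR_nonneg_of_zero_mem_minimizerFace (h0 : 0 ∈ minimizerFace K u) :
    ∀ v ∈ K, 0 ≤ dotR u v := fun v hv => by
  simpa [dotR_eq_dotProduct] using h0.2 v hv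

lemma minimizerFace_eq_of_nonneg (h0 : (0 : Fin n → ℝ) ∈ K) (hu : ∀ v ∈ K, 0 ≤ dotR u v) :
    minimizerFace K u = {v ∈ K | dotR u v = 0} := by
  ext v
  refine ⟨fun ⟨hv, hmin⟩ => ⟨hv, le_antisymm ?_ (hu v hv)⟩, fun ⟨hv, hzero⟩ => ⟨hv, ?_⟩⟩
  · simpa [dotR_eq_dotProduct] using hmin 0 h0
  · exact fun x hx => hzero ▸ hu x hx

lemma minimizerFace_add_smul (h0 : 0 ∈ minimizerFace K u) (hw : ∀ v ∈ K, 0 ≤ dotR w v)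
    (hwu : ∀ v ∈ minimizerFace K u, dotR w v = 0) {s : ℝ} (hs : 0 < s) :
    minimizerFace K (w + s • u) = minimizerFace K u := by
  have hu := dotR_nonneg_of_zero_mem_minimizerFace h0
  have hsum : ∀ v, dotR (w + s • u) v = dotR w v + s * dotR u v := fun v => by
    simp only [dotR_eq_dotProduct, add_dotProduct, smul_dotProduct, smul_eq_mul]
  rw [minimizerFace_eq_of_nonneg h0.1 fun v hv => hsum v ▸ by positivity [hw v hv, hu v hv]]
  rw [minimizerFace_eq_of_nonneg h0.1 hu] at hwu ⊢
  ext v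
  simp only [Set.mem_ofPred_eq, hsum]
  refine ⟨fun ⟨hv, hzero⟩ => ⟨hv, ?_⟩, fun hv => ⟨hv.1, ?_⟩⟩
  · nlinarith [hw v hv, hu v hv]
  · rw [hwu v hv, hv.2, mul_zero, add_zero]

end MinimizerFace

section DualFaceCone

variable {n : ℕ} {K γ : Set (Fin n → ℝ)} {u w : Fin n → ℝ}

lemma mem_dualFaceCone_of_nonneg (h0 : 0 ∈ minimizerFace K u) (hw : ∀ v ∈ K, 0 ≤ dotR w v)
    (hwu : ∀ v ∈ minimizerFace K u, dotR w v = 0) :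
    w ∈ dualFaceCone K (minimizerFace K u) := by
  have hlim : Filter.Tendsto (fun s : ℝ => w + s • u) (nhdsWithin 0 (Set.Ioi 0)) (nhds w) := by
    have hcont : Continuous fun s : ℝ => w + s • u := by fun_prop
    exact (hcont.tendsto' 0 w (by simp)).mono_left nhdsWithin_le_nhds
  exact mem_closure_of_tendsto hlim <| eventually_nhdsWithin_of_forall fun s hs =>
    minimizerFace_add_smul h0 hw hwu hs

lemma dotR_eq_zero_of_mem_dualFaceCone {p : Fin n → ℝ} (h0 : 0 ∈ γ) (hp : p ∈ γ)
    (hw : w ∈ dualFaceCone K γ) : dotR w p = 0 := by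
  refine closure_minimal (fun u (hu : minimizerFace K u = γ) => ?_)
    (isClosed_eq (continuous_id.dotProduct continuous_const) continuous_const) hw
  rw [← hu] at h0 hp
  simpa [dotR_eq_dotProduct] using le_antisymm (hp.2 0 h0.1) (h0.2 p hp.1)

end DualFaceCone

section Orthant

variable {n : ℕ}

lemma orthant_eq_pi (n : ℕ) : orthant n = Set.univ.pi fun _ => Set.Ici 0 := by
  ext; rw [Set.mem_univ_pi]; rfl

lemma convex_orthant (n : ℕ) : Convex ℝ (orthant n) := by
  rw [orthant_eq_pi]; exact convex_pi fun _ _ => convex_Ici 0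

lemma interior_orthant (n : ℕ) : interior (orthant n) = {x | ∀ i, 0 < x i} := by
  rw [orthant_eq_pi, interior_pi_set Set.finite_univ]; ext; simp

lemma single_one_mem_orthant (i : Fin n) : Pi.single i 1 ∈ orthant n := fun j => by
  rcases eq_or_ne j i with rfl | hj <;> simp [*]

lemma eq_zero_of_mem_orthant_of_dotR_eq_zero {w p : Fin n → ℝ} (hw : w ∈ orthant n)
    (hp : p ∈ interior (orthant n)) (h : dotR w p = 0) : w = 0 := by
  rw [interior_orthant] at hp
  funext i
  have hterm := (Finset.sum_eq_zero_iff_of_nonneg fun j _ => mul_nonneg (hw j) (hp j).le).mp h i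
    (Finset.mem_univ i)
  exact (mul_eq_zero.mp hterm).resolve_right (hp i).ne'

end Orthant

section IntrinsicInterior

variable {E : Type*} [AddCommGroup E] [Module ℝ E] [TopologicalSpace E] [IsTopologicalAddGroup E]
  [ContinuousSMul ℝ E] {s : Set E} {p q : E}

lemma exists_pos_add_smul_sub_mem_of_mem_intrinsicInterior (hp : p ∈ intrinsicInterior ℝ s)
    (hq : q ∈ s) : ∃ ε : ℝ, 0 < ε ∧ p + ε • (p - q) ∈ s := by
  obtain ⟨y, hy, rfl⟩ := mem_intrinsicInterior.mp hp
  let c : ℝ → affineSpan ℝ s := fun t =>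
    ⟨AffineMap.lineMap q y t, AffineMap.lineMap_mem t (subset_affineSpan ℝ s hq) y.2⟩
  have hc : Continuous c := (AffineMap.lineMap_continuous).subtype_mk _
  have hc1 : c 1 = y := Subtype.ext (AffineMap.lineMap_apply_one _ _)
  have hnhds : ∀ᶠ t in nhdsWithin 1 (Set.Ioi 1), c t ∈ interior (((↑) : _ → E) ⁻¹' s) :=
    nhdsWithin_le_nhds <| hc.continuousAt.preimage_mem_nhds (hc1 ▸ isOpen_interior.mem_nhds hy)
  obtain ⟨t, ht, ht1⟩ := (hnhds.and self_mem_nhdsWithin).exists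
  refine ⟨t - 1, sub_pos.mpr ht1, ?_⟩
  have hct : (c t : E) = y + (t - 1) • ((y : E) - q) := by
    simp only [c, AffineMap.lineMap_apply_module']
    module
  exact hct ▸ interior_subset (s := ((↑) : affineSpan ℝ s → E) ⁻¹' s) ht

lemma LinearMap.eq_zero_of_nonneg_of_mem_intrinsicInterior (f : E →ₗ[ℝ] ℝ)
    (hf : ∀ x ∈ s, 0 ≤ f x) (hp : p ∈ intrinsicInterior ℝ s) (hfp : f p = 0) (hq : q ∈ s) :
    f q = 0 := by
  obtain ⟨ε, hε, hmem⟩ := exists_pos_add_smul_sub_mem_of_mem_intrinsicInterior hp hq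
  have := hf _ hmem
  simp only [map_add, map_smul, map_sub, hfp, smul_eq_mul, zero_add, zero_sub, mul_neg,
    neg_nonneg] at this
  exact le_antisymm (nonpos_of_mul_nonpos_right this hε) (hf q hq)

end IntrinsicInterior

theorem relint_in_interior_iff_dual_cone_meets_orthant_trivially_general {n : ℕ}
    (V : Finset (Fin n → ℝ)) (hV : ∀ v ∈ V, ∀ i, 0 ≤ v i)
    (Γ : Set (Fin n → ℝ))
    (hΓ : Γ = convexHull ℝ (insert 0 (convexHull ℝ (V : Set (Fin n → ℝ)))))
    (γ : Set (Fin n → ℝ)) (hγ : IsFaceOf γ Γ) (h0γ : (0 : Fin n → ℝ) ∈ γ) :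
    intrinsicInterior ℝ γ ⊆ interior (orthant n) ↔
      dualFaceCone Γ γ ∩ orthant n = {0} := by
  obtain ⟨u, rfl⟩ := hγ
  have hΓO : Γ ⊆ orthant n := hΓ ▸ convexHull_min (Set.insert_subset_iff.mpr
    ⟨fun _ => le_rfl, convexHull_min hV (convex_orthant n)⟩) (convex_orthant n)
  constructor
  · intro hrelint
    obtain ⟨p, hp⟩ := Set.Nonempty.intrinsicInterior
      (convex_minimizerFace (hΓ ▸ convex_convexHull ℝ _) u) ⟨0, h0γ⟩
    refine Set.eq_singleton_iff_unique_mem.mpr ⟨⟨?_, fun _ => le_rfl⟩, fun w ⟨hwσ, hwO⟩ => ?_⟩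
    · exact mem_dualFaceCone_of_nonneg h0γ (by simp [dotR_eq_dotProduct])
        (by simp [dotR_eq_dotProduct])
    · exact eq_zero_of_mem_orthant_of_dotR_eq_zero hwO (hrelint hp)
        (dotR_eq_zero_of_mem_dualFaceCone h0γ (intrinsicInterior_subset hp) hwσ)
  · intro htrivial p hp
    rw [interior_orthant]
    intro i
    by_contra hpi
    have hγi : ∀ q ∈ minimizerFace Γ u, q i = 0 := fun q hq =>
      (LinearMap.proj i : (Fin n → ℝ) →ₗ[ℝ] ℝ).eq_zero_of_nonneg_of_mem_intrinsicInterior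
        (fun x hx => hΓO hx.1 i) hp
        (le_antisymm (not_lt.mp hpi) (hΓO (intrinsicInterior_subset hp).1 i)) hq
    have hsingle : Pi.single i 1 ∈ dualFaceCone Γ (minimizerFace Γ u) ∩ orthant n :=
      ⟨mem_dualFaceCone_of_nonneg h0γ
        (fun v hv => by simpa [dotR_eq_dotProduct] using hΓO hv i)
        (fun v hv => by simpa [dotR_eq_dotProduct] using hγi v hv),
      single_one_mem_orthant i⟩
    rw [htrivial, Set.mem_singleton_iff] at hsingle
    simpa using congrFun hsingle i

/-- let `Γ ⊂ ℝⁿ` be the convex hull of `{0}` and a polytope contained in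
`ℝⁿ₊`, with `dim Γ = n`, and let `γ` be a face of `Γ` with `0 ∈ γ`. Then the relative
interior of `γ` is contained in the interior of `ℝⁿ₊` if and only if
`σ(γ) ∩ ℝⁿ₊ = {0}`. -/
theorem relint_in_interior_iff_dual_cone_meets_orthant_trivially {n : ℕ}
    (V : Finset (Fin n → ℝ)) (hV : ∀ v ∈ V, ∀ i, 0 ≤ v i)
    (Γ : Set (Fin n → ℝ))
    (hΓ : Γ = convexHull ℝ (insert 0 (convexHull ℝ (V : Set (Fin n → ℝ)))))
    (hdim : Module.finrank ℝ (vectorSpan ℝ Γ) = n)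
    (γ : Set (Fin n → ℝ)) (hγ : IsFaceOf γ Γ) (h0γ : (0 : Fin n → ℝ) ∈ γ) :
    intrinsicInterior ℝ γ ⊆ interior (orthant n) ↔
      dualFaceCone Γ γ ∩ orthant n = {0} :=
  relint_in_interior_iff_dual_cone_meets_orthant_trivially_general V hV Γ hΓ γ hγ h0γ
end

section
/- Let f : ℂⁿ → ℂ be a polynomial that is convenient, i.e. its Newton polyhedron at infinity Γ∞(f) meets the positive part of every coordinate axis. Then Γ∞(f) has no atypical faces: every face γ of Γ∞(f) with 0 ∈ γ and dim γ ≥ 1 has dual cone σ(γ) contained in ℝⁿ₊. -/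
open scoped BigOperators

/-- The Newton polyhedron at infinity `Γ∞(f) = conv({0} ∪ NP(f))` of a polynomial. -/
def newtonPolyhedronAtInfinity {n : ℕ} (p : MvPolynomial (Fin n) ℂ) : Set (Fin n → ℝ) :=
  convexHull ℝ (insert 0
    ((fun d : Fin n →₀ ℕ => fun i => (d i : ℝ)) '' (p.support : Set (Fin n →₀ ℕ))))

/-- if a polynomial `f : ℂⁿ → ℂ` is convenient (its Newton polyhedron at
infinity meets the positive part of every coordinate axis), then `Γ∞(f)` has no atypical
face: every face `γ` of `Γ∞(f)` with `0 ∈ γ` and `dim γ ≥ 1` has its dual cone `σ(γ)`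
contained in `ℝⁿ₊`. -/
theorem convenient_no_atypical_faces {n : ℕ} (p : MvPolynomial (Fin n) ℂ)
    (Γ : Set (Fin n → ℝ)) (hΓ : Γ = newtonPolyhedronAtInfinity p)
    (hconvenient : ∀ i : Fin n, ∃ d : ℝ, 0 < d ∧ d • (Pi.single i 1 : Fin n → ℝ) ∈ Γ)
    (γ : Set (Fin n → ℝ)) (hγ : IsFaceOf γ Γ) (h0γ : (0 : Fin n → ℝ) ∈ γ)
    (hdimγ : 1 ≤ Module.finrank ℝ (vectorSpan ℝ γ)) :
    dualFaceCone Γ γ ⊆ orthant n := by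
  have hclosed : IsClosed (orthant n) := by
    have h : orthant n = ⋂ i, (fun x : Fin n → ℝ => x i) ⁻¹' Set.Ici 0 := by
      ext x; simp [orthant]
    rw [h]
    exact isClosed_iInter fun i => isClosed_Ici.preimage (continuous_apply i)
  refine closure_minimal ?_ hclosed
  intro u hu
  rw [Set.mem_setOf_eq] at hu
  have h0 : (0 : Fin n → ℝ) ∈ minimizerFace Γ u := hu ▸ h0γ
  obtain ⟨-, hmin⟩ := h0
  intro i
  obtain ⟨d, hd, hmem⟩ := hconvenient i
  have h1 := hmin _ hmem
  have hdot0 : dotR u 0 = 0 := by simp [dotR]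
  have hdot : dotR u (d • (Pi.single i 1 : Fin n → ℝ)) = d * u i := by
    simp only [dotR, Pi.smul_apply, Pi.single_apply, smul_eq_mul]
    rw [Finset.sum_eq_single i] <;> simp +contextual [mul_comm]
  rw [hdot0, hdot] at h1
  nlinarith
end
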